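/- Let X₁ ⊂ K^{n₁} and X₂ ⊂ K^{n₂} be open sets, and let u₁ ∈ S'(X₁), u₂ ∈ S'(X₂). Then WF_Λ(u₁ ⊗ u₂) ⊆ WF⁰_Λ(u₁) × WF⁰_Λ(u₂), where for a distribution v on X, WF⁰_Λ(v) = WF_Λ(v) ∪ (X × {0}). -/

import Mathlib

open MeasureTheory Filter Topology
open scoped BigOperators Classical

noncomputable section

/-- Axiomatization of a non-archimedean local field: a topological field equipped with a
surjective discrete valuation `ord : K → ℤ ∪ {∞}` whose closed balls are compact open and
form a neighborhood basis at every point. -/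
class NALocalField (K : Type) [Field K] [TopologicalSpace K] where
  ord : K → WithTop ℤ
  ord_eq_top_iff : ∀ x : K, ord x = ⊤ ↔ x = 0
  ord_mul : ∀ x y : K, ord (x * y) = ord x + ord y
  ord_add : ∀ x y : K, min (ord x) (ord y) ≤ ord (x + y)
  ord_surjective : ∀ m : ℤ, ∃ x : K, ord x = (m : WithTop ℤ)
  isOpen_ball : ∀ m : ℤ, IsOpen {x : K | (m : WithTop ℤ) ≤ ord x}
  isCompact_ball : ∀ m : ℤ, IsCompact {x : K | (m : WithTop ℤ) ≤ ord x}
  nhds_basis : ∀ x : K, (nhds x).HasBasis (fun _ : ℤ => True)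
      (fun m => {y : K | (m : WithTop ℤ) ≤ ord (y - x)})

variable {K : Type} [Field K] [TopologicalSpace K] [IsTopologicalRing K] [NALocalField K]

/-- The minimum of the valuations of the coordinates of a vector; `|v| = q^{-ordVec v}`. -/
def ordVec {ι : Type} [Fintype ι] (v : ι → K) : WithTop ℤ :=
  Finset.univ.inf fun i => NALocalField.ord (v i)

/-- The ball of valuative radius `r` around `x` in `K^ι`. -/
def pball {ι : Type} [Fintype ι] (x : ι → K) (r : ℤ) : Set (ι → K) :=
  {y | (r : WithTop ℤ) ≤ ordVec (x - y)}

section SB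
variable {α : Type} [TopologicalSpace α]

/-- Schwartz–Bruhat functions on a subset `X ⊆ α`: locally constant compactly supported
`ℂ`-valued functions on `X` (as functions on the subtype). -/
def IsSB (X : Set α) (f : X → ℂ) : Prop :=
  IsLocallyConstant f ∧ HasCompactSupport f

/-- A distribution on `X`: a functional which is `ℂ`-linear on Schwartz–Bruhat functions. -/
def IsDistribution (X : Set α) (u : (X → ℂ) → ℂ) : Prop :=
  (∀ (c : ℂ) (f : X → ℂ), IsSB X f → u (c • f) = c * u f) ∧
  (∀ f g : X → ℂ, IsSB X f → IsSB X g → u (f + g) = u f + u g)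

/-- Schwartz–Bruhat functions on an open subset `U ⊆ α`, realized as locally constant
compactly supported functions on `α` whose support is contained in `U`. -/
def IsSBOn (U : Set α) (f : α → ℂ) : Prop :=
  IsLocallyConstant f ∧ HasCompactSupport f ∧ tsupport f ⊆ U

/-- A distribution on an open set `U ⊆ α`, in the ambient-function realization. -/
def IsDistributionOn (U : Set α) (u : (α → ℂ) → ℂ) : Prop :=
  (∀ (c : ℂ) (f : α → ℂ), IsSBOn U f → u (c • f) = c * u f) ∧
  (∀ f g : α → ℂ, IsSBOn U f → IsSBOn U g → u (f + g) = u f + u g)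

end SB

/-- `ψ` is an additive character of `K` which is trivial on the maximal ideal and
nontrivial on the ring of integers. -/
def IsStandardChar (ψ : AddChar K ℂ) : Prop :=
  (∀ x : K, (1 : WithTop ℤ) ≤ NALocalField.ord x → ψ x = 1) ∧
  (∃ x : K, (0 : WithTop ℤ) ≤ NALocalField.ord x ∧ ψ x ≠ 1)

/-- `Λ` is an open subgroup of finite index of `(K^×, ×)`. -/
structure IsOpenFinIndexSubgroup (Λ : Set K) : Prop where
  one_mem : (1 : K) ∈ Λ
  mul_mem : ∀ a ∈ Λ, ∀ b ∈ Λ, a * b ∈ Λ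
  inv_mem : ∀ a ∈ Λ, a⁻¹ ∈ Λ
  ne_zero : ∀ a ∈ Λ, a ≠ 0
  isOpen : IsOpen Λ
  finiteIndex : ∃ T : Finset K, ∀ x : K, x ≠ 0 → ∃ t ∈ T, t * x ∈ Λ

section Fourier
variable (ψ : AddChar K ℂ)

/-- `F(φu)(ξ) = u(x ↦ φ(x) ψ(x·ξ))` for a functional `u`. -/
def FTrans {ι : Type} [Fintype ι] (u : ((ι → K) → ℂ) → ℂ) (φ : (ι → K) → ℂ)
    (ξ : ι → K) : ℂ :=
  u fun x => φ x * ψ (∑ i, x i * ξ i)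

/-- `Λ`-microlocal smoothness of a distribution on an open subset `U ⊆ K^ι` at a point
`(x₀, ξ₀)`: there are neighborhoods `U₀ ∋ x₀` and `V₀ ∋ ξ₀` such that for every
Schwartz–Bruhat `φ` supported in `U₀` there is `N ∈ ℤ` with `F(φu)(λξ) = 0` for all
`ξ ∈ V₀` and all `λ ∈ Λ` with `ord λ < N`. -/
def LamSmoothAt (Λ : Set K) {ι : Type} [Fintype ι] (U : Set (ι → K))
    (u : ((ι → K) → ℂ) → ℂ) (x₀ ξ₀ : ι → K) : Prop :=
  ∃ U₀ V₀ : Set (ι → K), IsOpen U₀ ∧ IsOpen V₀ ∧ x₀ ∈ U₀ ∧ ξ₀ ∈ V₀ ∧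
    ∀ φ : (ι → K) → ℂ, IsSBOn U φ → tsupport φ ⊆ U₀ →
      ∃ N : ℤ, ∀ lam ∈ Λ, NALocalField.ord lam < (N : WithTop ℤ) →
        ∀ ξ ∈ V₀, FTrans ψ u φ (fun i => lam * ξ i) = 0

/-- The `Λ`-wave front set of a distribution on an open subset `U ⊆ K^ι`: the complement
in `U × (K^ι ∖ {0})` of the set of `Λ`-smooth points. -/
def WFset (Λ : Set K) {ι : Type} [Fintype ι] (U : Set (ι → K))
    (u : ((ι → K) → ℂ) → ℂ) : Set ((ι → K) × (ι → K)) :=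
  {p | p.1 ∈ U ∧ p.2 ≠ 0 ∧ ¬ LamSmoothAt ψ Λ U u p.1 p.2}

end Fourier

section Product
variable (ψ : AddChar K ℂ) {n₁ n₂ : ℕ}

/-- `F(φw)(ξ₁,ξ₂) = w((x₁,x₂) ↦ φ(x₁,x₂) ψ(x₁·ξ₁ + x₂·ξ₂))` on `K^{n₁} × K^{n₂}`. -/
def FTrans2 (w : (((Fin n₁ → K) × (Fin n₂ → K)) → ℂ) → ℂ)
    (φ : ((Fin n₁ → K) × (Fin n₂ → K)) → ℂ) (ξ : (Fin n₁ → K) × (Fin n₂ → K)) : ℂ :=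
  w fun x => φ x * ψ ((∑ i, x.1 i * ξ.1 i) + ∑ j, x.2 j * ξ.2 j)

/-- `Λ`-microlocal smoothness on an open subset of `K^{n₁} × K^{n₂}`. -/
def LamSmoothAt2 (Λ : Set K) (U : Set ((Fin n₁ → K) × (Fin n₂ → K)))
    (w : (((Fin n₁ → K) × (Fin n₂ → K)) → ℂ) → ℂ)
    (x₀ ξ₀ : (Fin n₁ → K) × (Fin n₂ → K)) : Prop :=
  ∃ U₀ V₀ : Set ((Fin n₁ → K) × (Fin n₂ → K)), IsOpen U₀ ∧ IsOpen V₀ ∧ x₀ ∈ U₀ ∧ ξ₀ ∈ V₀ ∧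
    ∀ φ : ((Fin n₁ → K) × (Fin n₂ → K)) → ℂ, IsSBOn U φ → tsupport φ ⊆ U₀ →
      ∃ N : ℤ, ∀ lam ∈ Λ, NALocalField.ord lam < (N : WithTop ℤ) →
        ∀ ξ ∈ V₀, FTrans2 ψ w φ ((fun i => lam * ξ.1 i), fun j => lam * ξ.2 j) = 0

/-- The `Λ`-wave front set of a distribution on an open `U ⊆ K^{n₁} × K^{n₂}`. -/
def WFset2 (Λ : Set K) (U : Set ((Fin n₁ → K) × (Fin n₂ → K)))
    (w : (((Fin n₁ → K) × (Fin n₂ → K)) → ℂ) → ℂ) :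
    Set (((Fin n₁ → K) × (Fin n₂ → K)) × ((Fin n₁ → K) × (Fin n₂ → K))) :=
  {p | p.1 ∈ U ∧ p.2 ≠ 0 ∧ ¬ LamSmoothAt2 ψ Λ U w p.1 p.2}

end Product

/-!
If `u₁` is `Λ`-smooth at `(x₁, ξ₁)`, witnessed by neighbourhoods `U₁ ∋ x₁` and `V₁ ∋ ξ₁`, then
`u₁ ⊗ u₂` is `Λ`-smooth at `((x₁, x₂), (ξ₁, ξ₂))`, witnessed by `U₁ × K^{n₂}` and `V₁ × K^{n₂}`
(and symmetrically for `u₂`). A Schwartz–Bruhat test function is constant on all product balls of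
one small radius, hence a finite linear combination of indicators `1_{B₁ × B₂}` of product balls
inside its support. For such an indicator the Fourier transform factors,
`F(1_{B₁ × B₂} (u₁ ⊗ u₂))(λξ) = F(1_{B₁} u₁)(λξ₁) · F(1_{B₂} u₂)(λξ₂)`, and the first factor
vanishes for `ξ₁ ∈ V₁` and `ord λ` small enough; linearity in the test function concludes.
-/
open NALocalField

section Valuation

variable {K : Type} [Field K] [TopologicalSpace K] [NALocalField K]

theorem ord_zero : ord (0 : K) = ⊤ := (ord_eq_top_iff 0).2 rfl

theorem ord_ne_top {x : K} (hx : x ≠ 0) : ord x ≠ ⊤ := (ord_eq_top_iff x).not.2 hx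

theorem ord_one : ord (1 : K) = 0 := by
  have h := ord_mul (1 : K) 1
  rw [one_mul] at h
  obtain ⟨a, ha⟩ := WithTop.ne_top_iff_exists.1 (ord_ne_top (one_ne_zero (α := K)))
  rw [← ha] at h ⊢
  norm_cast at h ⊢
  omega

theorem ord_neg (x : K) : ord (-x) = ord x := by
  have h := ord_mul (-1 : K) (-1)
  rw [neg_mul_neg, one_mul, ord_one] at h
  have h₁ : ord (-1 : K) = 0 := by
    obtain ⟨a, ha⟩ := WithTop.ne_top_iff_exists.1 (ord_ne_top (by norm_num : (-1 : K) ≠ 0))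
    rw [← ha] at h ⊢
    norm_cast at h ⊢
    omega
  rw [← neg_one_mul, ord_mul, h₁, zero_add]

theorem ord_sub_comm (x y : K) : ord (x - y) = ord (y - x) := by
  rw [← ord_neg, neg_sub]

variable {ι : Type} [Fintype ι]

theorem mem_pball_iff {x y : ι → K} {r : ℤ} :
    y ∈ pball x r ↔ ∀ i, (r : WithTop ℤ) ≤ ord (x i - y i) := by
  simp only [pball, ordVec, Set.mem_ofPred_eq, Finset.le_inf_iff, Finset.mem_univ, true_imp_iff,
    Pi.sub_apply]

theorem mem_pball_self (x : ι → K) (r : ℤ) : x ∈ pball x r :=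
  mem_pball_iff.2 fun i => by simp [ord_zero]

theorem mem_pball_comm {x y : ι → K} {r : ℤ} : y ∈ pball x r ↔ x ∈ pball y r := by
  simp only [mem_pball_iff, ord_sub_comm (x _)]

theorem pball_trans {x y z : ι → K} {r : ℤ} (hy : y ∈ pball x r) (hz : z ∈ pball y r) :
    z ∈ pball x r :=
  mem_pball_iff.2 fun i => by
    rw [← sub_add_sub_cancel (x i) (y i) (z i)]
    exact (le_min (mem_pball_iff.1 hy i) (mem_pball_iff.1 hz i)).trans (ord_add _ _)

theorem pball_eq_of_mem {x y : ι → K} {r : ℤ} (hy : y ∈ pball x r) : pball y r = pball x r :=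
  Set.ext fun _ => ⟨pball_trans hy, pball_trans (mem_pball_comm.1 hy)⟩

theorem pball_subset_pball (x : ι → K) {r s : ℤ} (hrs : r ≤ s) : pball x s ⊆ pball x r :=
  fun _ hy => mem_pball_iff.2 fun i => (WithTop.coe_le_coe.2 hrs).trans (mem_pball_iff.1 hy i)

theorem pball_eq_pi (x : ι → K) (r : ℤ) :
    pball x r = Set.univ.pi fun i => {z | (r : WithTop ℤ) ≤ ord (z - x i)} := by
  ext y
  simp [mem_pball_iff, ord_sub_comm (x _)]

theorem pball_mem_nhds (x : ι → K) (r : ℤ) : pball x r ∈ 𝓝 x := by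
  rw [pball_eq_pi]
  exact set_pi_mem_nhds Set.finite_univ fun i _ => (nhds_basis (x i)).mem_of_mem trivial

theorem exists_pball_subset {x : ι → K} {W : Set (ι → K)} (hW : W ∈ 𝓝 x) :
    ∃ r : ℤ, pball x r ⊆ W := by
  rw [nhds_pi, Filter.mem_pi'] at hW
  obtain ⟨I, t, ht, hIt⟩ := hW
  choose r hr using fun i => (nhds_basis (x i)).mem_iff.1 (ht i)
  obtain ⟨M, hM⟩ := Finite.exists_le r
  refine ⟨M, fun y hy => hIt fun i _ => (hr i).2 ?_⟩
  rw [pball_eq_pi] at hy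
  exact (WithTop.coe_le_coe.2 (hM i)).trans (hy i trivial)

theorem isOpen_pball (x : ι → K) (r : ℤ) : IsOpen (pball x r) :=
  isOpen_iff_mem_nhds.2 fun _ hy => pball_eq_of_mem hy ▸ pball_mem_nhds _ r

theorem isClosed_pball (x : ι → K) (r : ℤ) : IsClosed (pball x r) :=
  isOpen_compl_iff.1 <| isOpen_iff_mem_nhds.2 fun y hy =>
    Filter.mem_of_superset (pball_mem_nhds y r) fun _ hz hzx =>
      hy (pball_trans hzx (mem_pball_comm.1 hz))

theorem isCompact_pball [IsTopologicalAddGroup K] (x : ι → K) (r : ℤ) :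
    IsCompact (pball x r) := by
  rw [pball_eq_pi]
  refine isCompact_univ_pi fun i => ?_
  exact (Homeomorph.subRight (x i)).isCompact_preimage.2 (isCompact_ball r)

end Valuation

section SchwartzBruhat

variable {α : Type} [TopologicalSpace α] {U : Set α}

theorem isSBOn_zero : IsSBOn U (0 : α → ℂ) :=
  ⟨IsLocallyConstant.const 0, HasCompactSupport.zero, by simp⟩

theorem IsSBOn.add {f g : α → ℂ} (hf : IsSBOn U f) (hg : IsSBOn U g) : IsSBOn U (f + g) :=
  ⟨hf.1.add hg.1, hf.2.1.add hg.2.1, (tsupport_add f g).trans (Set.union_subset hf.2.2 hg.2.2)⟩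

theorem IsSBOn.mul_isLocallyConstant {f g : α → ℂ} (hf : IsSBOn U f)
    (hg : IsLocallyConstant g) : IsSBOn U fun x => f x * g x :=
  ⟨hf.1.mul hg, hf.2.1.mul_right, tsupport_mul_subset_left.trans hf.2.2⟩

theorem IsSBOn.smul {f : α → ℂ} (a : ℂ) (hf : IsSBOn U f) : IsSBOn U (a • f) :=
  ⟨hf.1.comp (a • ·), hf.2.1.smul_left,
    (closure_mono (Function.support_const_smul_subset a f)).trans hf.2.2⟩

theorem IsSBOn.mono {U' : Set α} {f : α → ℂ} (hf : IsSBOn U f) (hUU' : U ⊆ U') : IsSBOn U' f :=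
  ⟨hf.1, hf.2.1, hf.2.2.trans hUU'⟩

theorem isSBOn_indicator_one {s : Set α} (hs : IsClopen s) (hsc : IsCompact s) (hsU : s ⊆ U) :
    IsSBOn U (s.indicator 1) := by
  have hsupp : tsupport (s.indicator (1 : α → ℂ)) ⊆ s :=
    closure_minimal Set.support_indicator_subset hs.isClosed
  exact ⟨(LocallyConstant.charFn ℂ hs).isLocallyConstant,
    hsc.of_isClosed_subset (isClosed_tsupport _) hsupp, hsupp.trans hsU⟩

def IsTensorDistribution {β : Type} [TopologicalSpace β] (X : Set α) (Y : Set β)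
    (u : (α → ℂ) → ℂ) (v : (β → ℂ) → ℂ) (w : (α × β → ℂ) → ℂ) : Prop :=
  ∀ φ₁ φ₂, IsSBOn X φ₁ → IsSBOn Y φ₂ → w (fun p => φ₁ p.1 * φ₂ p.2) = u φ₁ * v φ₂

theorem IsDistributionOn.map_zero {u : (α → ℂ) → ℂ} (hu : IsDistributionOn U u) : u 0 = 0 := by
  simpa using hu.1 0 0 isSBOn_zero

end SchwartzBruhat

section ProdBall

variable {K : Type} [Field K] [TopologicalSpace K] [NALocalField K]
  {ι₁ ι₂ : Type} [Fintype ι₁] [Fintype ι₂]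

def prodBall (c : (ι₁ → K) × (ι₂ → K)) (m : ℤ) : Set ((ι₁ → K) × (ι₂ → K)) :=
  pball c.1 m ×ˢ pball c.2 m

theorem mem_prodBall_self (c : (ι₁ → K) × (ι₂ → K)) (m : ℤ) : c ∈ prodBall c m :=
  ⟨mem_pball_self _ _, mem_pball_self _ _⟩

theorem prodBall_eq_of_mem {c y : (ι₁ → K) × (ι₂ → K)} {m : ℤ} (hy : y ∈ prodBall c m) :
    prodBall y m = prodBall c m := by
  simp only [prodBall, pball_eq_of_mem hy.1, pball_eq_of_mem hy.2]

theorem mem_prodBall_iff_eq {c y : (ι₁ → K) × (ι₂ → K)} {m : ℤ} :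
    y ∈ prodBall c m ↔ prodBall y m = prodBall c m :=
  ⟨prodBall_eq_of_mem, fun h => h ▸ mem_prodBall_self y m⟩

theorem prodBall_subset_prodBall (c : (ι₁ → K) × (ι₂ → K)) {r s : ℤ} (hrs : r ≤ s) :
    prodBall c s ⊆ prodBall c r :=
  Set.prod_mono (pball_subset_pball _ hrs) (pball_subset_pball _ hrs)

theorem isOpen_prodBall (c : (ι₁ → K) × (ι₂ → K)) (m : ℤ) : IsOpen (prodBall c m) :=
  (isOpen_pball _ _).prod (isOpen_pball _ _)

theorem isClosed_prodBall (c : (ι₁ → K) × (ι₂ → K)) (m : ℤ) : IsClosed (prodBall c m) :=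
  (isClosed_pball _ _).prod (isClosed_pball _ _)

theorem isCompact_prodBall [IsTopologicalAddGroup K] (c : (ι₁ → K) × (ι₂ → K)) (m : ℤ) :
    IsCompact (prodBall c m) :=
  (isCompact_pball _ _).prod (isCompact_pball _ _)

theorem prodBall_mem_nhds (c : (ι₁ → K) × (ι₂ → K)) (m : ℤ) : prodBall c m ∈ 𝓝 c :=
  (isOpen_prodBall c m).mem_nhds (mem_prodBall_self c m)

theorem exists_prodBall_subset {x : (ι₁ → K) × (ι₂ → K)} {W : Set ((ι₁ → K) × (ι₂ → K))}
    (hW : W ∈ 𝓝 x) : ∃ m : ℤ, prodBall x m ⊆ W := by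
  rw [nhds_prod_eq, Filter.mem_prod_iff] at hW
  obtain ⟨W₁, hW₁, W₂, hW₂, hW⟩ := hW
  obtain ⟨r₁, hr₁⟩ := exists_pball_subset hW₁
  obtain ⟨r₂, hr₂⟩ := exists_pball_subset hW₂
  refine ⟨max r₁ r₂, Set.Subset.trans ?_ hW⟩
  exact Set.prod_mono ((pball_subset_pball _ (le_max_left _ _)).trans hr₁)
    ((pball_subset_pball _ (le_max_right _ _)).trans hr₂)

theorem prodBall_subset_prod_iff {c : (ι₁ → K) × (ι₂ → K)} {m : ℤ} {s : Set (ι₁ → K)}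
    {t : Set (ι₂ → K)} : prodBall c m ⊆ s ×ˢ t ↔ pball c.1 m ⊆ s ∧ pball c.2 m ⊆ t :=
  Set.prod_subset_prod_iff' ⟨c, mem_prodBall_self c m⟩

theorem prodBall_indicator_one {R : Type} [MulZeroOneClass R] (c : (ι₁ → K) × (ι₂ → K))
    (m : ℤ) : (prodBall c m).indicator (1 : (ι₁ → K) × (ι₂ → K) → R) =
      fun x => (pball c.1 m).indicator 1 x.1 * (pball c.2 m).indicator 1 x.2 :=
  funext fun _ => Set.indicator_prod_one

theorem IsLocallyConstant.exists_forall_prodBall_eq {β : Type} [Zero β]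
    {φ : (ι₁ → K) × (ι₂ → K) → β} (hlc : IsLocallyConstant φ) (hcs : HasCompactSupport φ) :
    ∃ m : ℤ, ∀ x, ∀ y ∈ prodBall x m, φ y = φ x := by
  have hloc : ∀ x, ∃ r : ℤ, ∀ y ∈ prodBall x r, φ y = φ x := fun x =>
    exists_prodBall_subset ((IsLocallyConstant.iff_eventually_eq φ).1 hlc x)
  choose rad hrad using hloc
  obtain ⟨t, -, hcover⟩ := hcs.elim_nhds_subcover (fun x => prodBall x (rad x))
    fun x _ => prodBall_mem_nhds x (rad x)
  obtain ⟨M, hM⟩ := Finset.exists_le (t.image rad)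
  have hsupp : ∀ x ∈ tsupport φ, ∀ y ∈ prodBall x M, φ y = φ x := by
    intro x hx y hy
    obtain ⟨c, hct, hxc⟩ := Set.mem_iUnion₂.1 (hcover hx)
    have hsub : prodBall x M ⊆ prodBall c (rad c) :=
      prodBall_eq_of_mem hxc ▸ prodBall_subset_prodBall x (hM _ (Finset.mem_image_of_mem rad hct))
    rw [hrad c y (hsub hy), hrad c x hxc]
  refine ⟨M, fun x y hy => ?_⟩
  by_cases hx : x ∈ tsupport φ
  · exact hsupp x hx y hy
  by_cases hy' : y ∈ tsupport φ
  · exact (hsupp y hy' x (mem_prodBall_iff_eq.2 (prodBall_eq_of_mem hy).symm)).symm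
  rw [image_eq_zero_of_notMem_tsupport hx, image_eq_zero_of_notMem_tsupport hy']

theorem mem_span_indicator_prodBall_of_subset_biUnion {R : Type} [Ring R] {m : ℤ}
    {S : Set ((ι₁ → K) × (ι₂ → K))} (t : Finset ((ι₁ → K) × (ι₂ → K)))
    (φ : (ι₁ → K) × (ι₂ → K) → R) (hconst : ∀ x, ∀ y ∈ prodBall x m, φ y = φ x)
    (hS : φ.support ⊆ S) (hcover : φ.support ⊆ ⋃ c ∈ t, prodBall c m) :
    φ ∈ Submodule.span R {f | ∃ c, prodBall c m ⊆ S ∧ f = (prodBall c m).indicator 1} := by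
  classical
  induction t using Finset.induction_on generalizing φ with
  | empty =>
    obtain rfl : φ = 0 := funext fun x => by_contra fun hx => by simpa using hcover hx
    exact Submodule.zero_mem _
  | insert c t _ ih =>
    have hsplit : φ = (prodBall c m)ᶜ.indicator φ + φ c • (prodBall c m).indicator 1 := by
      funext x
      by_cases hx : x ∈ prodBall c m
      · simp [hx, hconst c x hx]
      · simp [hx]
    rw [hsplit]
    refine Submodule.add_mem _ (ih _ (fun x y hy => ?_) ?_ ?_) ?_
    · have hmem : y ∈ prodBall c m ↔ x ∈ prodBall c m := by
        rw [mem_prodBall_iff_eq, mem_prodBall_iff_eq (y := x), prodBall_eq_of_mem hy]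
      by_cases hx : x ∈ prodBall c m <;> simp [hx, hmem.mpr, hmem.not.mpr, hconst x y hy]
    · rw [Set.support_indicator]
      exact Set.inter_subset_right.trans hS
    · rw [Set.support_indicator]
      rintro x ⟨hxc, hx⟩
      obtain ⟨c', hc', hxc'⟩ := Set.mem_iUnion₂.1 (hcover hx)
      rcases Finset.mem_insert.1 hc' with rfl | hc'
      · exact absurd hxc' hxc
      · exact Set.mem_iUnion₂.2 ⟨c', hc', hxc'⟩
    · by_cases hc : φ c = 0
      · simp [hc]
      refine Submodule.smul_mem _ _ (Submodule.subset_span ⟨c, fun y hy => hS ?_, rfl⟩)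
      rwa [Function.mem_support, hconst c y hy]

theorem mem_span_indicator_prodBall {R : Type} [Ring R] {φ : (ι₁ → K) × (ι₂ → K) → R}
    (hlc : IsLocallyConstant φ) (hcs : HasCompactSupport φ) :
    φ ∈ Submodule.span R
      {f | ∃ c m, prodBall c m ⊆ φ.support ∧ f = (prodBall c m).indicator 1} := by
  obtain ⟨m, hconst⟩ := hlc.exists_forall_prodBall_eq hcs
  obtain ⟨t, -, hcover⟩ := hcs.elim_nhds_subcover (fun c => prodBall c m)
    fun c _ => prodBall_mem_nhds c m
  refine Submodule.span_mono ?_ (mem_span_indicator_prodBall_of_subset_biUnion t φ hconst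
    subset_rfl ((subset_tsupport φ).trans hcover))
  rintro _ ⟨c, hc, rfl⟩
  exact ⟨c, m, hc, rfl⟩

end ProdBall

section Fourier

variable {K : Type} [Field K] [TopologicalSpace K] {n₁ n₂ : ℕ}

theorem FTrans2_zero {ψ : AddChar K ℂ} {w : (((Fin n₁ → K) × (Fin n₂ → K)) → ℂ) → ℂ}
    {U : Set ((Fin n₁ → K) × (Fin n₂ → K))} (hw : IsDistributionOn U w)
    (ξ : (Fin n₁ → K) × (Fin n₂ → K)) : FTrans2 ψ w 0 ξ = 0 := by
  simp only [FTrans2, Pi.zero_apply, zero_mul]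
  exact hw.map_zero

variable [NALocalField K] (ψ : AddChar K ℂ) (Λ : Set K)

-- The vanishing conditions inside `LamSmoothAt` and `LamSmoothAt2`, for one test function.
def FTransEventuallyZero {ι : Type} [Fintype ι] (u : ((ι → K) → ℂ) → ℂ) (φ : (ι → K) → ℂ)
    (V : Set (ι → K)) : Prop :=
  ∃ N : ℤ, ∀ lam ∈ Λ, ord lam < (N : WithTop ℤ) → ∀ ξ ∈ V, FTrans ψ u φ (fun i => lam * ξ i) = 0

def FTrans2EventuallyZero (w : (((Fin n₁ → K) × (Fin n₂ → K)) → ℂ) → ℂ)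
    (φ : ((Fin n₁ → K) × (Fin n₂ → K)) → ℂ) (V : Set ((Fin n₁ → K) × (Fin n₂ → K))) : Prop :=
  ∃ N : ℤ, ∀ lam ∈ Λ, ord lam < (N : WithTop ℤ) →
    ∀ ξ ∈ V, FTrans2 ψ w φ ((fun i => lam * ξ.1 i), fun j => lam * ξ.2 j) = 0

variable {ψ}

theorem IsStandardChar.isLocallyConstant (hψ : IsStandardChar ψ) : IsLocallyConstant ψ := by
  refine (IsLocallyConstant.iff_eventually_eq _).2 fun x => ?_
  filter_upwards [(nhds_basis x).mem_of_mem (i := 1) trivial] with y hy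
  rw [← sub_add_cancel y x, AddChar.map_add_eq_mul, hψ.1 _ hy, one_mul]

variable [IsTopologicalRing K]

theorem IsStandardChar.isLocallyConstant_dotProduct (hψ : IsStandardChar ψ) {ι : Type}
    [Fintype ι] (η : ι → K) : IsLocallyConstant fun y : ι → K => ψ (∑ i, y i * η i) :=
  hψ.isLocallyConstant.comp_continuous (by fun_prop)

variable {X₁ : Set (Fin n₁ → K)} {X₂ : Set (Fin n₂ → K)}
  {w : (((Fin n₁ → K) × (Fin n₂ → K)) → ℂ) → ℂ} {φ φ' : ((Fin n₁ → K) × (Fin n₂ → K)) → ℂ}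

theorem IsSBOn.mul_char (hψ : IsStandardChar ψ) {U : Set ((Fin n₁ → K) × (Fin n₂ → K))}
    (hφ : IsSBOn U φ) (ξ : (Fin n₁ → K) × (Fin n₂ → K)) :
    IsSBOn U fun x => φ x * ψ ((∑ i, x.1 i * ξ.1 i) + ∑ j, x.2 j * ξ.2 j) :=
  hφ.mul_isLocallyConstant (hψ.isLocallyConstant.comp_continuous (by fun_prop))

theorem FTrans2_add (hψ : IsStandardChar ψ) {U : Set ((Fin n₁ → K) × (Fin n₂ → K))}
    (hw : IsDistributionOn U w) (hφ : IsSBOn U φ) (hφ' : IsSBOn U φ')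
    (ξ : (Fin n₁ → K) × (Fin n₂ → K)) :
    FTrans2 ψ w (φ + φ') ξ = FTrans2 ψ w φ ξ + FTrans2 ψ w φ' ξ := by
  rw [FTrans2, FTrans2, FTrans2, ← hw.2 _ _ (hφ.mul_char hψ ξ) (hφ'.mul_char hψ ξ)]
  congr 1
  funext x
  simp only [Pi.add_apply, add_mul]

theorem FTrans2_smul (hψ : IsStandardChar ψ) {U : Set ((Fin n₁ → K) × (Fin n₂ → K))}
    (hw : IsDistributionOn U w) (a : ℂ) (hφ : IsSBOn U φ) (ξ : (Fin n₁ → K) × (Fin n₂ → K)) :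
    FTrans2 ψ w (a • φ) ξ = a * FTrans2 ψ w φ ξ := by
  rw [FTrans2, FTrans2, ← hw.1 a _ (hφ.mul_char hψ ξ)]
  congr 1
  funext x
  simp only [Pi.smul_apply, smul_eq_mul, mul_assoc]

theorem FTrans2_tensor (hψ : IsStandardChar ψ) {u₁ : ((Fin n₁ → K) → ℂ) → ℂ}
    {u₂ : ((Fin n₂ → K) → ℂ) → ℂ}
    (htensor : IsTensorDistribution X₁ X₂ u₁ u₂ w)
    {φ₁ : (Fin n₁ → K) → ℂ} {φ₂ : (Fin n₂ → K) → ℂ} (hφ₁ : IsSBOn X₁ φ₁) (hφ₂ : IsSBOn X₂ φ₂)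
    (ξ : (Fin n₁ → K) × (Fin n₂ → K)) :
    FTrans2 ψ w (fun x => φ₁ x.1 * φ₂ x.2) ξ = FTrans ψ u₁ φ₁ ξ.1 * FTrans ψ u₂ φ₂ ξ.2 := by
  rw [FTrans2, FTrans, FTrans,
    ← htensor _ _ (hφ₁.mul_isLocallyConstant (hψ.isLocallyConstant_dotProduct ξ.1))
      (hφ₂.mul_isLocallyConstant (hψ.isLocallyConstant_dotProduct ξ.2))]
  congr 1
  funext x
  rw [AddChar.map_add_eq_mul]
  ring

end Fourier

section TensorProduct

variable {K : Type} [Field K] [TopologicalSpace K] [NALocalField K]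
  {ψ : AddChar K ℂ} {Λ : Set K} {n₁ n₂ : ℕ} {X₁ : Set (Fin n₁ → K)} {X₂ : Set (Fin n₂ → K)}
  {u₁ : ((Fin n₁ → K) → ℂ) → ℂ} {u₂ : ((Fin n₂ → K) → ℂ) → ℂ}
  {w : (((Fin n₁ → K) × (Fin n₂ → K)) → ℂ) → ℂ} {U : Set ((Fin n₁ → K) × (Fin n₂ → K))}
  {φ φ' : ((Fin n₁ → K) × (Fin n₂ → K)) → ℂ} {V : Set ((Fin n₁ → K) × (Fin n₂ → K))}

theorem ftrans2EventuallyZero_zero (hw : IsDistributionOn U w) :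
    FTrans2EventuallyZero ψ Λ w 0 V :=
  ⟨0, fun _ _ _ _ _ => FTrans2_zero hw _⟩

variable [IsTopologicalRing K]

theorem FTrans2EventuallyZero.add (hψ : IsStandardChar ψ) (hw : IsDistributionOn U w)
    (hφ : IsSBOn U φ) (hφ' : IsSBOn U φ') (h : FTrans2EventuallyZero ψ Λ w φ V)
    (h' : FTrans2EventuallyZero ψ Λ w φ' V) : FTrans2EventuallyZero ψ Λ w (φ + φ') V := by
  obtain ⟨N, hN⟩ := h
  obtain ⟨N', hN'⟩ := h'
  refine ⟨min N N', fun lam hlam hord ξ hξ => ?_⟩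
  have hordN : ord lam < (N : WithTop ℤ) := hord.trans_le (by exact_mod_cast min_le_left N N')
  have hordN' : ord lam < (N' : WithTop ℤ) := hord.trans_le (by exact_mod_cast min_le_right N N')
  rw [FTrans2_add hψ hw hφ hφ', hN lam hlam hordN ξ hξ, hN' lam hlam hordN' ξ hξ, add_zero]

theorem FTrans2EventuallyZero.smul (hψ : IsStandardChar ψ) (hw : IsDistributionOn U w) (a : ℂ)
    (hφ : IsSBOn U φ) (h : FTrans2EventuallyZero ψ Λ w φ V) :
    FTrans2EventuallyZero ψ Λ w (a • φ) V := by
  obtain ⟨N, hN⟩ := h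
  exact ⟨N, fun lam hlam hord ξ hξ => by
    rw [FTrans2_smul hψ hw a hφ, hN lam hlam hord ξ hξ, mul_zero]⟩

theorem IsSBOn.ftrans2EventuallyZero_of_prodBall (hψ : IsStandardChar ψ)
    (hw : IsDistributionOn U w) (hφ : IsSBOn U φ)
    (h : ∀ c m, prodBall c m ⊆ φ.support →
      FTrans2EventuallyZero ψ Λ w ((prodBall c m).indicator 1) V) :
    FTrans2EventuallyZero ψ Λ w φ V := by
  refine (Submodule.span_induction (p := fun f _ => IsSBOn U f ∧ FTrans2EventuallyZero ψ Λ w f V)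
    ?_ ?_ ?_ ?_ (mem_span_indicator_prodBall hφ.1 hφ.2.1)).2
  · rintro _ ⟨c, m, hcm, rfl⟩
    refine ⟨isSBOn_indicator_one ⟨isClosed_prodBall c m, isOpen_prodBall c m⟩
      (isCompact_prodBall c m) ?_, h c m hcm⟩
    exact hcm.trans ((subset_tsupport φ).trans hφ.2.2)
  · exact ⟨isSBOn_zero, ftrans2EventuallyZero_zero hw⟩
  · rintro f g - - ⟨hf, hfV⟩ ⟨hg, hgV⟩
    exact ⟨hf.add hg, hfV.add hψ hw hf hg hgV⟩
  · rintro a f - ⟨hf, hfV⟩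
    exact ⟨hf.smul a, hfV.smul hψ hw a hf⟩

theorem FTransEventuallyZero.tensor_left (hψ : IsStandardChar ψ)
    (htensor : IsTensorDistribution X₁ X₂ u₁ u₂ w)
    {φ₁ : (Fin n₁ → K) → ℂ} {φ₂ : (Fin n₂ → K) → ℂ} (hφ₁ : IsSBOn X₁ φ₁) (hφ₂ : IsSBOn X₂ φ₂)
    {V₁ : Set (Fin n₁ → K)} (V₂ : Set (Fin n₂ → K)) (h : FTransEventuallyZero ψ Λ u₁ φ₁ V₁) :
    FTrans2EventuallyZero ψ Λ w (fun x => φ₁ x.1 * φ₂ x.2) (V₁ ×ˢ V₂) := by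
  obtain ⟨N, hN⟩ := h
  exact ⟨N, fun lam hlam hord ξ hξ => by
    rw [FTrans2_tensor hψ htensor hφ₁ hφ₂, hN lam hlam hord ξ.1 hξ.1, zero_mul]⟩

theorem FTransEventuallyZero.tensor_right (hψ : IsStandardChar ψ)
    (htensor : IsTensorDistribution X₁ X₂ u₁ u₂ w)
    {φ₁ : (Fin n₁ → K) → ℂ} {φ₂ : (Fin n₂ → K) → ℂ} (hφ₁ : IsSBOn X₁ φ₁) (hφ₂ : IsSBOn X₂ φ₂)
    (V₁ : Set (Fin n₁ → K)) {V₂ : Set (Fin n₂ → K)} (h : FTransEventuallyZero ψ Λ u₂ φ₂ V₂) :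
    FTrans2EventuallyZero ψ Λ w (fun x => φ₁ x.1 * φ₂ x.2) (V₁ ×ˢ V₂) := by
  obtain ⟨N, hN⟩ := h
  exact ⟨N, fun lam hlam hord ξ hξ => by
    rw [FTrans2_tensor hψ htensor hφ₁ hφ₂, hN lam hlam hord ξ.2 hξ.2, mul_zero]⟩

theorem isSBOn_indicator_pball {ι : Type} [Fintype ι] {X : Set (ι → K)} {x : ι → K} {r : ℤ}
    (h : pball x r ⊆ X) : IsSBOn X ((pball x r).indicator 1) :=
  isSBOn_indicator_one ⟨isClosed_pball x r, isOpen_pball x r⟩ (isCompact_pball x r) h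

theorem LamSmoothAt.tensor_left (hψ : IsStandardChar ψ) (hw : IsDistributionOn (X₁ ×ˢ X₂) w)
    (htensor : IsTensorDistribution X₁ X₂ u₁ u₂ w)
    {x₁ ξ₁ : Fin n₁ → K} (x₂ ξ₂ : Fin n₂ → K) (h : LamSmoothAt ψ Λ X₁ u₁ x₁ ξ₁) :
    LamSmoothAt2 ψ Λ (X₁ ×ˢ X₂) w (x₁, x₂) (ξ₁, ξ₂) := by
  obtain ⟨U₁, V₁, hU₁, hV₁, hx₁, hξ₁, hdecay⟩ := h
  refine ⟨U₁ ×ˢ Set.univ, V₁ ×ˢ Set.univ, hU₁.prod isOpen_univ, hV₁.prod isOpen_univ,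
    ⟨hx₁, trivial⟩, ⟨hξ₁, trivial⟩, fun φ hφ hφU => hφ.ftrans2EventuallyZero_of_prodBall hψ hw
    fun c m hcm => ?_⟩
  have hsub : prodBall c m ⊆ (X₁ ∩ U₁) ×ˢ (X₂ ∩ Set.univ) := by
    rw [← Set.prod_inter_prod]
    exact hcm.trans ((subset_tsupport φ).trans (Set.subset_inter hφ.2.2 hφU))
  obtain ⟨hB₁, hB₂⟩ := prodBall_subset_prod_iff.1 hsub
  have hSB₁ := isSBOn_indicator_pball hB₁
  have hSB₂ := (isSBOn_indicator_pball hB₂).mono Set.inter_subset_left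
  rw [prodBall_indicator_one]
  exact FTransEventuallyZero.tensor_left hψ htensor (hSB₁.mono Set.inter_subset_left) hSB₂
    Set.univ (hdecay _ (hSB₁.mono Set.inter_subset_left) (hSB₁.2.2.trans Set.inter_subset_right))

theorem LamSmoothAt.tensor_right (hψ : IsStandardChar ψ) (hw : IsDistributionOn (X₁ ×ˢ X₂) w)
    (htensor : IsTensorDistribution X₁ X₂ u₁ u₂ w)
    (x₁ ξ₁ : Fin n₁ → K) {x₂ ξ₂ : Fin n₂ → K} (h : LamSmoothAt ψ Λ X₂ u₂ x₂ ξ₂) :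
    LamSmoothAt2 ψ Λ (X₁ ×ˢ X₂) w (x₁, x₂) (ξ₁, ξ₂) := by
  obtain ⟨U₂, V₂, hU₂, hV₂, hx₂, hξ₂, hdecay⟩ := h
  refine ⟨Set.univ ×ˢ U₂, Set.univ ×ˢ V₂, isOpen_univ.prod hU₂, isOpen_univ.prod hV₂,
    ⟨trivial, hx₂⟩, ⟨trivial, hξ₂⟩, fun φ hφ hφU => hφ.ftrans2EventuallyZero_of_prodBall hψ hw
    fun c m hcm => ?_⟩
  have hsub : prodBall c m ⊆ (X₁ ∩ Set.univ) ×ˢ (X₂ ∩ U₂) := by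
    rw [← Set.prod_inter_prod]
    exact hcm.trans ((subset_tsupport φ).trans (Set.subset_inter hφ.2.2 hφU))
  obtain ⟨hB₁, hB₂⟩ := prodBall_subset_prod_iff.1 hsub
  have hSB₁ := (isSBOn_indicator_pball hB₁).mono Set.inter_subset_left
  have hSB₂ := isSBOn_indicator_pball hB₂
  rw [prodBall_indicator_one]
  exact FTransEventuallyZero.tensor_right hψ htensor hSB₁ (hSB₂.mono Set.inter_subset_left)
    Set.univ (hdecay _ (hSB₂.mono Set.inter_subset_left) (hSB₂.2.2.trans Set.inter_subset_right))

end TensorProduct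

theorem waveFront_tensor_subset_general {K : Type} [Field K] [TopologicalSpace K]
    [IsTopologicalRing K] [NALocalField K]
    (ψ : AddChar K ℂ) (hψ : IsStandardChar ψ)
    (Λ : Set K)
    {n₁ n₂ : ℕ} (X₁ : Set (Fin n₁ → K)) (X₂ : Set (Fin n₂ → K))
    (u₁ : ((Fin n₁ → K) → ℂ) → ℂ) (u₂ : ((Fin n₂ → K) → ℂ) → ℂ)
    (w : (((Fin n₁ → K) × (Fin n₂ → K)) → ℂ) → ℂ)
    (hw : IsDistributionOn (X₁ ×ˢ X₂) w)
    (htensor : ∀ (φ₁ : (Fin n₁ → K) → ℂ) (φ₂ : (Fin n₂ → K) → ℂ),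
      IsSBOn X₁ φ₁ → IsSBOn X₂ φ₂ → w (fun p => φ₁ p.1 * φ₂ p.2) = u₁ φ₁ * u₂ φ₂) :
    ∀ (x₁ : Fin n₁ → K) (x₂ : Fin n₂ → K) (ξ₁ : Fin n₁ → K) (ξ₂ : Fin n₂ → K),
      ((x₁, x₂), (ξ₁, ξ₂)) ∈ WFset2 ψ Λ (X₁ ×ˢ X₂) w →
        (x₁, ξ₁) ∈ WFset ψ Λ X₁ u₁ ∪ X₁ ×ˢ ({0} : Set (Fin n₁ → K)) ∧
        (x₂, ξ₂) ∈ WFset ψ Λ X₂ u₂ ∪ X₂ ×ˢ ({0} : Set (Fin n₂ → K)) := by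
  rintro x₁ x₂ ξ₁ ξ₂ ⟨⟨hx₁, hx₂⟩, -, hsing⟩
  refine ⟨?_, ?_⟩
  · by_cases hξ₁ : ξ₁ = 0
    · exact Or.inr ⟨hx₁, hξ₁⟩
    · exact Or.inl ⟨hx₁, hξ₁, fun h => hsing (h.tensor_left hψ hw htensor x₂ ξ₂)⟩
  · by_cases hξ₂ : ξ₂ = 0
    · exact Or.inr ⟨hx₂, hξ₂⟩
    · exact Or.inl ⟨hx₂, hξ₂, fun h => hsing (h.tensor_right hψ hw htensor x₁ ξ₁)⟩

/-- wave front sets of tensor products. Let `X₁ ⊆ K^{n₁}`,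
`X₂ ⊆ K^{n₂}` be open and `u₁ ∈ S'(X₁)`, `u₂ ∈ S'(X₂)`. Then
`WF_Λ(u₁ ⊗ u₂) ⊆ WF⁰_Λ(u₁) × WF⁰_Λ(u₂)`, where `WF⁰_Λ(v) = WF_Λ(v) ∪ (X × {0})`. -/
theorem waveFront_tensor_subset {K : Type} [Field K] [TopologicalSpace K]
    [IsTopologicalRing K] [NALocalField K]
    (ψ : AddChar K ℂ) (hψ : IsStandardChar ψ)
    (Λ : Set K) (hΛ : IsOpenFinIndexSubgroup Λ)
    {n₁ n₂ : ℕ} (X₁ : Set (Fin n₁ → K)) (X₂ : Set (Fin n₂ → K))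
    (h₁ : IsOpen X₁) (h₂ : IsOpen X₂)
    (u₁ : ((Fin n₁ → K) → ℂ) → ℂ) (u₂ : ((Fin n₂ → K) → ℂ) → ℂ)
    (hu₁ : IsDistributionOn X₁ u₁) (hu₂ : IsDistributionOn X₂ u₂)
    (w : (((Fin n₁ → K) × (Fin n₂ → K)) → ℂ) → ℂ)
    (hw : IsDistributionOn (X₁ ×ˢ X₂) w)
    (htensor : ∀ (φ₁ : (Fin n₁ → K) → ℂ) (φ₂ : (Fin n₂ → K) → ℂ),
      IsSBOn X₁ φ₁ → IsSBOn X₂ φ₂ → w (fun p => φ₁ p.1 * φ₂ p.2) = u₁ φ₁ * u₂ φ₂) :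
    ∀ (x₁ : Fin n₁ → K) (x₂ : Fin n₂ → K) (ξ₁ : Fin n₁ → K) (ξ₂ : Fin n₂ → K),
      ((x₁, x₂), (ξ₁, ξ₂)) ∈ WFset2 ψ Λ (X₁ ×ˢ X₂) w →
        (x₁, ξ₁) ∈ WFset ψ Λ X₁ u₁ ∪ X₁ ×ˢ ({0} : Set (Fin n₁ → K)) ∧
        (x₂, ξ₂) ∈ WFset ψ Λ X₂ u₂ ∪ X₂ ×ˢ ({0} : Set (Fin n₂ → K)) :=
  waveFront_tensor_subset_general ψ hψ Λ X₁ X₂ u₁ u₂ w hw htensor
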